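/- Let B be a symmetric positive definite d×d real matrix and X a symmetric d×d real matrix, and let α + β = 0 (say β = −α). Then ⟨∫₀¹ B^{α(1−s)} X B^{αs} ds, ∫₀¹ B^{β(1−s)} X B^{βs} ds⟩ ≥ |X|², where ⟨·,·⟩ and |·| are the Frobenius inner product and norm. -/
import Mathlib


open Matrix MeasureTheory

variable {d : ℕ}

/-- Spectral real matrix power of a hermitian matrix. -/
noncomputable def mpow {A : Matrix (Fin d) (Fin d) ℝ} (hA : A.IsHermitian) (t : ℝ) :
    Matrix (Fin d) (Fin d) ℝ :=
  (hA.eigenvectorUnitary : Matrix (Fin d) (Fin d) ℝ) *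
    Matrix.diagonal (fun i => hA.eigenvalues i ^ t) *
    (star hA.eigenvectorUnitary : Matrix (Fin d) (Fin d) ℝ)

/-- Spectral matrix logarithm of a hermitian (positive definite) matrix. -/
noncomputable def mlog {A : Matrix (Fin d) (Fin d) ℝ} (hA : A.IsHermitian) :
    Matrix (Fin d) (Fin d) ℝ :=
  (hA.eigenvectorUnitary : Matrix (Fin d) (Fin d) ℝ) *
    Matrix.diagonal (fun i => Real.log (hA.eigenvalues i)) *
    (star hA.eigenvectorUnitary : Matrix (Fin d) (Fin d) ℝ)

/-- Frobenius inner product. -/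
def fip (X Y : Matrix (Fin d) (Fin d) ℝ) : ℝ := ∑ i, ∑ j, X i j * Y i j

/-- Frobenius norm. -/
noncomputable def fnorm (X : Matrix (Fin d) (Fin d) ℝ) : ℝ := Real.sqrt (fip X X)

/-- Entrywise integral over [0,1] of a matrix-valued function. -/
noncomputable def mint (F : ℝ → Matrix (Fin d) (Fin d) ℝ) : Matrix (Fin d) (Fin d) ℝ :=
  Matrix.of fun i j => ∫ s in (0:ℝ)..1, F s i j

/-- Entrywise derivative of a matrix-valued function. -/
noncomputable def mderiv {m : ℕ} (F : ℝ → Matrix (Fin m) (Fin m) ℝ) (x : ℝ) :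
    Matrix (Fin m) (Fin m) ℝ :=
  Matrix.of fun i j => deriv (fun y => F y i j) x

namespace Aux

variable {A : Matrix (Fin d) (Fin d) ℝ}

lemma mpow_transpose (hA : A.IsHermitian) (t : ℝ) : (mpow hA t)ᵀ = mpow hA t := by
  unfold mpow
  rw [transpose_mul, transpose_mul, Matrix.diagonal_transpose]
  rw [mul_assoc]
  rfl

lemma mpow_add (hB : A.PosDef) (s t : ℝ) :
    mpow hB.1 s * mpow hB.1 t = mpow hB.1 (s + t) := by
  have h1 : (star hB.1.eigenvectorUnitary : Matrix (Fin d) (Fin d) ℝ) *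
      (hB.1.eigenvectorUnitary : Matrix (Fin d) (Fin d) ℝ) = 1 :=
    Unitary.coe_star_mul_self _
  unfold mpow
  simp only [← mul_assoc]
  rw [mul_assoc _ (star (hB.1.eigenvectorUnitary : Matrix (Fin d) (Fin d) ℝ))
      ((hB.1.eigenvectorUnitary : Matrix (Fin d) (Fin d) ℝ)), h1, mul_one,
    mul_assoc _ (Matrix.diagonal _) (Matrix.diagonal _), diagonal_mul_diagonal]
  have h2 : (fun i => hB.1.eigenvalues i ^ s * hB.1.eigenvalues i ^ t) =
      fun i => hB.1.eigenvalues i ^ (s + t) :=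
    funext fun i => (Real.rpow_add (hB.eigenvalues_pos i) s t).symm
  rw [h2]

lemma mpow_apply (hA : A.IsHermitian) (t : ℝ) (i j : Fin d) :
    mpow hA t i j = ∑ k, (hA.eigenvectorUnitary : Matrix (Fin d) (Fin d) ℝ) i k *
      (hA.eigenvalues k ^ t) * (hA.eigenvectorUnitary : Matrix (Fin d) (Fin d) ℝ) j k := by
  simp [mpow, mul_apply, mul_diagonal, conjTranspose_apply, diagonal_apply, mul_ite, mul_zero,
    ite_mul, zero_mul, Finset.sum_ite_eq, Finset.sum_ite_eq']

lemma continuous_mpow_entry (hB : A.PosDef) {f : ℝ → ℝ} (hf : Continuous f) (i j : Fin d) :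
    Continuous fun s => mpow hB.1 (f s) i j := by
  simp only [mpow_apply]
  refine continuous_finset_sum _ fun k _ => ?_
  have : (fun s => (hB.1.eigenvalues k) ^ (f s)) =
      fun s => Real.exp (Real.log (hB.1.eigenvalues k) * f s) := by
    funext s
    exact Real.rpow_def_of_pos (hB.eigenvalues_pos k) _
  exact ((continuous_const.mul ((this ▸ (Real.continuous_exp.comp (continuous_const.mul hf))) :
    Continuous fun s => (hB.1.eigenvalues k) ^ (f s)))).mul continuous_const

lemma continuous_sandwich (hB : A.PosDef) (X : Matrix (Fin d) (Fin d) ℝ)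
    {f g : ℝ → ℝ} (hf : Continuous f) (hg : Continuous g) (i j : Fin d) :
    Continuous fun s => (mpow hB.1 (f s) * X * mpow hB.1 (g s)) i j := by
  simp only [mul_apply]
  refine continuous_finset_sum _ fun l _ => ?_
  exact (continuous_finset_sum _ fun k _ =>
    (continuous_mpow_entry hB hf i k).mul continuous_const).mul
    (continuous_mpow_entry hB hg l j)

lemma fip_eq_trace (M N : Matrix (Fin d) (Fin d) ℝ) : fip M N = (Mᵀ * N).trace := by
  simp only [fip, Matrix.trace, Matrix.diag, mul_apply, transpose_apply]
  exact Finset.sum_comm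

lemma fip_self_nonneg (M : Matrix (Fin d) (Fin d) ℝ) : 0 ≤ fip M M :=
  Finset.sum_nonneg fun i _ => Finset.sum_nonneg fun j _ => mul_self_nonneg _

lemma fip_transpose_self (M : Matrix (Fin d) (Fin d) ℝ) : fip Mᵀ Mᵀ = fip M M := by
  simp only [fip, transpose_apply]
  exact Finset.sum_comm

lemma fip_prod (M N : Matrix (Fin d) (Fin d) ℝ) :
    fip M N = ∑ p : Fin d × Fin d, M p.1 p.2 * N p.1 p.2 := by
  rw [fip]
  exact (Fintype.sum_prod_type (f := fun p : Fin d × Fin d => M p.1 p.2 * N p.1 p.2)).symm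

lemma fip_cauchy_schwarz (M N : Matrix (Fin d) (Fin d) ℝ) :
    (fip M N) ^ 2 ≤ fip M M * fip N N := by
  simp only [fip_prod]
  have := Finset.sum_mul_sq_le_sq_mul_sq Finset.univ (fun p : Fin d × Fin d => M p.1 p.2)
    (fun p : Fin d × Fin d => N p.1 p.2)
  simpa [sq] using this

end Aux

namespace Aux2
open Aux

variable {A : Matrix (Fin d) (Fin d) ℝ}

lemma fip_eq_trace' (M N : Matrix (Fin d) (Fin d) ℝ) : fip M N = (star M * N).trace :=
  fip_eq_trace M N

lemma fip_conj (U M C : Matrix (Fin d) (Fin d) ℝ) (h1 : star U * U = 1)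
    (h2 : U * star U = 1) :
    fip (U * M * star U) (U * C * star U) = fip M C := by
  have hcancel : ∀ Z : Matrix (Fin d) (Fin d) ℝ, star U * (U * Z) = Z := fun Z => by
    rw [← mul_assoc, h1, one_mul]
  rw [fip_eq_trace', fip_eq_trace']
  simp only [StarMul.star_mul, star_star]
  simp only [mul_assoc]
  rw [hcancel]
  rw [Matrix.trace_mul_comm]
  simp only [mul_assoc]
  rw [h1, mul_one]

lemma sandwich_eq (hB : A.PosDef) (X : Matrix (Fin d) (Fin d) ℝ) (a b : ℝ) :
    mpow hB.1 a * X * mpow hB.1 b =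
      (hB.1.eigenvectorUnitary : Matrix (Fin d) (Fin d) ℝ) *
        (Matrix.diagonal (fun i => hB.1.eigenvalues i ^ a) *
          ((star hB.1.eigenvectorUnitary : Matrix (Fin d) (Fin d) ℝ) * X *
            (hB.1.eigenvectorUnitary : Matrix (Fin d) (Fin d) ℝ)) *
          Matrix.diagonal (fun i => hB.1.eigenvalues i ^ b)) *
      (star hB.1.eigenvectorUnitary : Matrix (Fin d) (Fin d) ℝ) := by
  unfold mpow
  simp only [mul_assoc]

lemma fip_diag (v w v' w' : Fin d → ℝ) (M N : Matrix (Fin d) (Fin d) ℝ) :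
    fip (Matrix.diagonal v * M * Matrix.diagonal w) (Matrix.diagonal v' * N * Matrix.diagonal w')
      = ∑ i, ∑ j, (v i * w j * (v' i * w' j)) * (M i j * N i j) := by
  simp only [fip, Matrix.mul_diagonal, Matrix.diagonal_mul]
  exact Finset.sum_congr rfl fun i _ => Finset.sum_congr rfl fun j _ => by ring

lemma scalar_key (v : Fin d → ℝ) (hv : ∀ i, 0 < v i) (M : Matrix (Fin d) (Fin d) ℝ)
    (hM : ∀ i j, M i j = M j i) (u : ℝ) :
    ∑ i, ∑ j, M i j * M i j ≤ ∑ i, ∑ j, (v i ^ u * v j ^ (-u)) * (M i j * M i j) := by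
  have hone : ∀ i, v i ^ (u/2) * v i ^ (-(u/2)) = 1 := fun i => by
    rw [← Real.rpow_add (hv i)]; simp
  have hhalf : ∀ i, v i ^ (u/2) * v i ^ (u/2) = v i ^ u := fun i => by
    rw [← Real.rpow_add (hv i)]; ring_nf
  have hhalf' : ∀ i, v i ^ (-(u/2)) * v i ^ (-(u/2)) = v i ^ (-u) := fun i => by
    rw [← Real.rpow_add (hv i)]; ring_nf
  set f : Fin d × Fin d → ℝ := fun p => M p.1 p.2 * (v p.1 ^ (u/2) * v p.2 ^ (-(u/2))) with hf
  set g : Fin d × Fin d → ℝ := fun p => M p.1 p.2 * (v p.1 ^ (-(u/2)) * v p.2 ^ (u/2)) with hg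
  have hA : ∑ p : Fin d × Fin d, f p * g p = ∑ i, ∑ j, M i j * M i j := by
    rw [Fintype.sum_prod_type]
    refine Finset.sum_congr rfl fun i _ => Finset.sum_congr rfl fun j _ => ?_
    have h1 := hone i
    have h2 : v j ^ (-(u/2)) * v j ^ (u/2) = 1 := by rw [mul_comm]; exact hone j
    simp only [hf, hg]
    calc M i j * (v i ^ (u/2) * v j ^ (-(u/2))) * (M i j * (v i ^ (-(u/2)) * v j ^ (u/2)))
        = (M i j * M i j) * ((v i ^ (u/2) * v i ^ (-(u/2))) * (v j ^ (-(u/2)) * v j ^ (u/2))) := by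
          ring
      _ = M i j * M i j := by rw [h1, h2]; ring
  have hB2 : ∑ p : Fin d × Fin d, f p ^ 2 =
      ∑ i, ∑ j, (v i ^ u * v j ^ (-u)) * (M i j * M i j) := by
    rw [Fintype.sum_prod_type]
    refine Finset.sum_congr rfl fun i _ => Finset.sum_congr rfl fun j _ => ?_
    simp only [hf]
    calc (M i j * (v i ^ (u/2) * v j ^ (-(u/2)))) ^ 2
        = ((v i ^ (u/2) * v i ^ (u/2)) * (v j ^ (-(u/2)) * v j ^ (-(u/2)))) *
            (M i j * M i j) := by ring
      _ = (v i ^ u * v j ^ (-u)) * (M i j * M i j) := by rw [hhalf, hhalf']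
  have hC : ∑ p : Fin d × Fin d, g p ^ 2 = ∑ p : Fin d × Fin d, f p ^ 2 := by
    rw [Fintype.sum_prod_type, Fintype.sum_prod_type]
    rw [Finset.sum_comm]
    refine Finset.sum_congr rfl fun i _ => Finset.sum_congr rfl fun j _ => ?_
    simp only [hf, hg]
    rw [hM j i]
    ring
  have hcs := Finset.sum_mul_sq_le_sq_mul_sq Finset.univ f g
  rw [hC, hA] at hcs
  have hApos : 0 ≤ ∑ i, ∑ j, M i j * M i j :=
    Finset.sum_nonneg fun i _ => Finset.sum_nonneg fun j _ => mul_self_nonneg _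
  have hBpos : 0 ≤ ∑ p : Fin d × Fin d, f p ^ 2 :=
    Finset.sum_nonneg fun p _ => sq_nonneg _
  rw [← hB2]
  nlinarith [hcs, hApos, hBpos]

lemma key (hB : A.PosDef) (X : Matrix (Fin d) (Fin d) ℝ) (hX : Xᵀ = X)
    (a b c e : ℝ) (h : a + b + c + e = 0) :
    fip X X ≤ fip (mpow hB.1 a * X * mpow hB.1 b) (mpow hB.1 c * X * mpow hB.1 e) := by
  set U : Matrix (Fin d) (Fin d) ℝ := (hB.1.eigenvectorUnitary : Matrix (Fin d) (Fin d) ℝ)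
    with hU
  have h1 : star U * U = 1 := Unitary.coe_star_mul_self _
  have h2 : U * star U = 1 := Unitary.coe_mul_star_self _
  set M : Matrix (Fin d) (Fin d) ℝ := star U * X * U with hMdef
  have hXs : star X = X := hX
  have hMstar : star M = M := by
    rw [hMdef]
    simp only [StarMul.star_mul, star_star, hXs]
    simp only [mul_assoc]
  have hMsym : ∀ i j, M i j = M j i := by
    intro i j
    conv_lhs => rw [← hMstar]
    simp [Matrix.conjTranspose_apply]
  have hXeq : U * M * star U = X := by
    rw [hMdef]
    simp only [mul_assoc]
    rw [h2, mul_one, ← mul_assoc, h2, one_mul]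
  have hfipX : fip X X = ∑ i, ∑ j, M i j * M i j := by
    conv_lhs => rw [← hXeq]
    rw [fip_conj U M M h1 h2]
    rfl
  have hsand := sandwich_eq hB X
  rw [sandwich_eq hB X a b, sandwich_eq hB X c e, ← hU, ← hMdef,
    fip_conj _ _ _ h1 h2, fip_diag, hfipX]
  have hco : ∀ i j, hB.1.eigenvalues i ^ a * hB.1.eigenvalues j ^ b *
      (hB.1.eigenvalues i ^ c * hB.1.eigenvalues j ^ e) =
      hB.1.eigenvalues i ^ (a + c) * hB.1.eigenvalues j ^ (-(a + c)) := by
    intro i j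
    have h3 : -(a + c) = b + e := by linarith
    rw [h3, Real.rpow_add (hB.eigenvalues_pos i) a c, Real.rpow_add (hB.eigenvalues_pos j) b e]
    ring
  simp only [hco]
  exact scalar_key _ hB.eigenvalues_pos M hMsym (a + c)

end Aux2

set_option maxHeartbeats 2000000 in
theorem stmt17 (B X : Matrix (Fin d) (Fin d) ℝ) (hB : B.PosDef) (hX : Xᵀ = X)
    (α β : ℝ) (hαβ : α + β = 0) :
    fip (mint (fun s => mpow hB.1 (α * (1 - s)) * X * mpow hB.1 (α * s)))
        (mint (fun s => mpow hB.1 (β * (1 - s)) * X * mpow hB.1 (β * s))) ≥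
      (fnorm X) ^ 2 := by
  have hβ : β = -α := by linarith
  subst hβ
  set F : ℝ → Matrix (Fin d) (Fin d) ℝ :=
    fun s => mpow hB.1 (α * (1 - s)) * X * mpow hB.1 (α * s) with hF
  set G : ℝ → Matrix (Fin d) (Fin d) ℝ :=
    fun s => mpow hB.1 (-α * (1 - s)) * X * mpow hB.1 (-α * s) with hG
  have hcF : ∀ i j, Continuous fun s => F s i j := fun i j =>
    Aux.continuous_sandwich hB X (continuous_const.mul (continuous_const.sub continuous_id))
      (continuous_const.mul continuous_id) i j
  have hcG : ∀ i j, Continuous fun t => G t i j := fun i j =>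
    Aux.continuous_sandwich hB X (continuous_const.mul (continuous_const.sub continuous_id))
      (continuous_const.mul continuous_id) i j
  have hpt : ∀ s t, fip X X ≤ fip (F s) (G t) := fun s t =>
    Aux2.key hB X hX _ _ _ _ (by ring)
  have hB2 : ∀ s : ℝ, fip (F s) (mint G) = ∫ t in (0:ℝ)..1, fip (F s) (G t) := by
    intro s
    rw [Aux.fip_prod]
    have hm : ∀ p : Fin d × Fin d, F s p.1 p.2 * mint G p.1 p.2
        = ∫ t in (0:ℝ)..1, F s p.1 p.2 * G t p.1 p.2 := fun p =>
      (intervalIntegral.integral_const_mul (F s p.1 p.2) (fun t => G t p.1 p.2)).symm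
    simp only [hm]
    have hsum := intervalIntegral.integral_finset_sum (μ := MeasureTheory.volume)
      (a := (0:ℝ)) (b := 1) (s := (Finset.univ : Finset (Fin d × Fin d)))
      (f := fun (p : Fin d × Fin d) t => F s p.1 p.2 * G t p.1 p.2)
      (fun p _ => (continuous_const.mul (hcG p.1 p.2)).intervalIntegrable 0 1)
    rw [← hsum]
    congr 1
    funext t
    exact (Aux.fip_prod _ _).symm
  have hA2 : fip (mint F) (mint G) = ∫ s in (0:ℝ)..1, fip (F s) (mint G) := by
    rw [Aux.fip_prod]
    have hm : ∀ p : Fin d × Fin d, mint F p.1 p.2 * mint G p.1 p.2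
        = ∫ s in (0:ℝ)..1, F s p.1 p.2 * mint G p.1 p.2 := fun p =>
      (intervalIntegral.integral_mul_const (mint G p.1 p.2) (fun s => F s p.1 p.2)).symm
    simp only [hm]
    have hsum := intervalIntegral.integral_finset_sum (μ := MeasureTheory.volume)
      (a := (0:ℝ)) (b := 1) (s := (Finset.univ : Finset (Fin d × Fin d)))
      (f := fun (p : Fin d × Fin d) s => F s p.1 p.2 * mint G p.1 p.2)
      (fun p _ => ((hcF p.1 p.2).mul continuous_const).intervalIntegrable 0 1)
    rw [← hsum]
    congr 1
    funext s
    exact (Aux.fip_prod _ _).symm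
  have hstep : ∀ s : ℝ, fip X X ≤ fip (F s) (mint G) := by
    intro s
    rw [hB2 s]
    have hconst : fip X X = ∫ _t in (0:ℝ)..1, fip X X := by simp
    rw [hconst]
    have hint : IntervalIntegrable (fun t => fip (F s) (G t)) MeasureTheory.volume 0 1 := by
      apply Continuous.intervalIntegrable
      show Continuous fun t => ∑ i, ∑ j, F s i j * G t i j
      exact continuous_finset_sum _ fun i _ => continuous_finset_sum _ fun j _ =>
        continuous_const.mul (hcG i j)
    exact intervalIntegral.integral_mono zero_le_one intervalIntegrable_const hint
      (fun t => hpt s t)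
  have hcfip : Continuous fun s => fip (F s) (mint G) := by
    show Continuous fun s => ∑ i, ∑ j, F s i j * mint G i j
    exact continuous_finset_sum _ fun i _ => continuous_finset_sum _ fun j _ =>
      (hcF i j).mul continuous_const
  calc (fnorm X) ^ 2 = fip X X := by rw [fnorm, Real.sq_sqrt (Aux.fip_self_nonneg X)]
    _ = ∫ _s in (0:ℝ)..1, fip X X := by simp
    _ ≤ ∫ s in (0:ℝ)..1, fip (F s) (mint G) :=
        intervalIntegral.integral_mono zero_le_one intervalIntegrable_const
          (hcfip.intervalIntegrable 0 1) hstep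
    _ = fip (mint F) (mint G) := hA2.symm
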